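/- Let G be a finite group, H a subgroup of G, X a normal subset of G, and b an involution of G with b⁻¹Hb = H. Then H is a perfect code of CS(G,X) if and only if the coset Hb is a perfect code of CS(G,X). -/
import Mathlib


def caySum (G : Type*) [Group G] (X : Set G) : SimpleGraph G :=
  SimpleGraph.fromRel (fun g h => g * h ∈ X)

def IsNormalSet {G : Type*} [Group G] (X : Set G) : Prop :=
  ∀ g x : G, x ∈ X → g⁻¹ * x * g ∈ X

def IsPerfectCode {V : Type*} (Γ : SimpleGraph V) (C : Set V) : Prop :=
  (∀ u ∈ C, ∀ v ∈ C, ¬ Γ.Adj u v) ∧ ∀ v ∉ C, ∃! u, u ∈ C ∧ Γ.Adj v u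

def IsTotalPerfectCode {V : Type*} (Γ : SimpleGraph V) (C : Set V) : Prop :=
  ∀ v, ∃! u, u ∈ C ∧ Γ.Adj v u

def IsLeftTransversal {G : Type*} [Group G] (T : Set G) (H : Subgroup G) : Prop :=
  ∀ g : G, ∃! t, t ∈ T ∧ g⁻¹ * t ∈ H

section Aux

variable {G : Type*} [Group G] {X : Set G}

lemma swapX (hX : IsNormalSet X) (u v : G) : u * v ∈ X ↔ v * u ∈ X := by
  constructor
  · intro h
    have := hX u (u * v) h
    rwa [show u⁻¹ * (u * v) * u = v * u by group] at this
  · intro h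
    have := hX v (v * u) h
    rwa [show v⁻¹ * (v * u) * v = u * v by group] at this

lemma caySum_adj (hX : IsNormalSet X) (a c : G) :
    (caySum G X).Adj a c ↔ a ≠ c ∧ a * c ∈ X := by
  show (SimpleGraph.fromRel _).Adj a c ↔ _
  rw [SimpleGraph.fromRel_adj]
  constructor
  · rintro ⟨hne, h | h⟩
    · exact ⟨hne, h⟩
    · exact ⟨hne, (swapX hX c a).mp h⟩
  · rintro ⟨hne, h⟩
    exact ⟨hne, Or.inl h⟩

/-- Master reformulation of perfect codes of Cayley sum graphs. -/
lemma master (hX : IsNormalSet X) (C : Set G) :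
    IsPerfectCode (caySum G X) C ↔ ∀ v, ∃! u, u ∈ C ∧ (u = v ∨ u * v ∈ X) := by
  constructor
  · rintro ⟨ind, nbr⟩ v
    by_cases hv : v ∈ C
    · refine ⟨v, ⟨hv, Or.inl rfl⟩, ?_⟩
      rintro u ⟨hu, h | h⟩
      · exact h
      · by_contra hne
        exact ind u hu v hv ((caySum_adj hX u v).mpr ⟨hne, h⟩)
    · obtain ⟨u, ⟨hu, hadj⟩, huniq⟩ := nbr v hv
      have hx := ((caySum_adj hX v u).mp hadj).2
      refine ⟨u, ⟨hu, Or.inr ((swapX hX v u).mp hx)⟩, ?_⟩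
      rintro y ⟨hy, h | h⟩
      · exact absurd (h ▸ hy) hv
      · refine huniq y ⟨hy, (caySum_adj hX v y).mpr ⟨?_, (swapX hX y v).mp h⟩⟩
        intro e; exact hv (e ▸ hy)
  · intro M
    constructor
    · intro u hu v hv hadj
      obtain ⟨hne, hx⟩ := (caySum_adj hX u v).mp hadj
      obtain ⟨w, _, huniq⟩ := M v
      have h1 : u = w := huniq u ⟨hu, Or.inr hx⟩
      have h2 : v = w := huniq v ⟨hv, Or.inl rfl⟩
      exact hne (h1.trans h2.symm)
    · intro v hv
      obtain ⟨u, ⟨hu, hp⟩, huniq⟩ := M v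
      have hx : u * v ∈ X := hp.resolve_left (fun e => hv (e ▸ hu))
      have hne : v ≠ u := fun e => hv (e ▸ hu)
      refine ⟨u, ⟨hu, (caySum_adj hX v u).mpr ⟨hne, (swapX hX u v).mp hx⟩⟩, ?_⟩
      rintro y ⟨hy, hadj⟩
      exact huniq y ⟨hy, Or.inr ((swapX hX v y).mp ((caySum_adj hX v y).mp hadj).2)⟩

end Aux

section Main

variable {G : Type*} [Group G] {X : Set G}

/-- Key lemma 1: from the master condition for `H`,
squares in `X` force commutation with `b`. -/
lemma crux1 {H : Subgroup G} (hX : IsNormalSet X) {b : G} (hb2 : b * b = 1)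
    (hHb : ∀ h : G, h ∈ H ↔ b⁻¹ * h * b ∈ H) (hbH : b ∉ H)
    (C1 : ∀ v : G, ∃! h, h ∈ H ∧ (h = v ∨ h * v ∈ X))
    {v : G} (hv : v ∈ H) (hvv : v * v ∈ X) : b * v * b = v := by
  have hbinv : b⁻¹ = b := by
    rw [inv_eq_iff_mul_eq_one]; exact hb2
  -- step 1 : every element of H squares to v*v, hence to 1
  have hsq : ∀ h : G, h ∈ H → h * h = v * v := by
    intro h hh
    have hk : h⁻¹ * (v * v) ∈ H := H.mul_mem (H.inv_mem hh) (H.mul_mem hv hv)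
    obtain ⟨w, _, huniq⟩ := C1 (h⁻¹ * (v * v))
    have e1 : h = w := huniq h ⟨hh, Or.inr (by rw [mul_inv_cancel_left]; exact hvv)⟩
    have e2 : h⁻¹ * (v * v) = w := huniq _ ⟨hk, Or.inl rfl⟩
    have e : h = h⁻¹ * (v * v) := e1.trans e2.symm
    calc h * h = h * (h⁻¹ * (v * v)) := by rw [← e]
    _ = v * v := by rw [mul_inv_cancel_left]
  have hv1 : v * v = 1 := by
    have := hsq 1 H.one_mem
    simpa using this.symm
  have hsq1 : ∀ h : G, h ∈ H → h * h = 1 := fun h hh => (hsq h hh).trans hv1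
  -- step 2 : unique H-neighbour of b
  obtain ⟨u₀, ⟨hu₀, hp⟩, huniq⟩ := C1 b
  have hu₀b : u₀ * b ∈ X := hp.resolve_left (fun e => hbH (e ▸ hu₀))
  -- step 3 : conjugate the neighbour relation by v
  have hbvb : b * v * b ∈ H := by
    have := (hHb v).mp hv
    rwa [hbinv] at this
  have hu' : v⁻¹ * u₀ * (b * v * b) ∈ H := H.mul_mem (H.mul_mem (H.inv_mem hv) hu₀) hbvb
  have hu'b : (v⁻¹ * u₀ * (b * v * b)) * b ∈ X := by
    have h0 := hX v (u₀ * b) hu₀b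
    have : v⁻¹ * (u₀ * b) * v = v⁻¹ * u₀ * (b * v * b) * b := by
      rw [show v⁻¹ * u₀ * (b * v * b) * b = v⁻¹ * u₀ * (b * v * (b * b)) by group, hb2]
      group
    rwa [this] at h0
  have e3 : v⁻¹ * u₀ * (b * v * b) = u₀ :=
    (huniq _ ⟨hu', Or.inr hu'b⟩).trans (huniq u₀ ⟨hu₀, Or.inr hu₀b⟩).symm
  -- step 4 : H is elementary abelian, so u₀ commutes with v
  have hcomm : u₀ * v = v * u₀ := by
    have h1 := hsq1 (u₀ * v) (H.mul_mem hu₀ hv)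
    have h2 := hsq1 u₀ hu₀
    have h3 := hsq1 v hv
    calc u₀ * v = u₀ * (u₀ * v * (u₀ * v)) * v := by rw [h1]; group
    _ = (u₀ * u₀) * v * u₀ * (v * v) := by group
    _ = v * u₀ := by rw [h2, h3]; group
  -- conclude
  have e4 : b * v * b = (v⁻¹ * u₀)⁻¹ * u₀ := eq_inv_mul_iff_mul_eq.mpr e3
  rw [e4, mul_inv_rev, inv_inv, mul_assoc, ← hcomm, inv_mul_cancel_left]

/-- Key lemma 2: from the master condition for `Hb`, an `X`-relation
within `H` forces equality. -/
lemma crux2 {H : Subgroup G} (hX : IsNormalSet X) {b : G} (hb2 : b * b = 1)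
    (hHb : ∀ h : G, h ∈ H ↔ b⁻¹ * h * b ∈ H) (hbH : b ∉ H)
    (C2 : ∀ v : G, ∃! h, h ∈ H ∧ (h = b * v * b ∨ h * v ∈ X))
    {v h : G} (hv : v ∈ H) (hh : h ∈ H) (hhv : h * v ∈ X) : h = v := by
  have hbinv : b⁻¹ = b := by
    rw [inv_eq_iff_mul_eq_one]; exact hb2
  have hmemb : ∀ g : G, g ∈ H ↔ b * g * b ∈ H := by
    intro g; rw [hHb g, hbinv]
  -- uniqueness at an interior vertex
  have hveq : ∀ w : G, w ∈ H → ∀ h' : G, h' ∈ H → h' * w ∈ X → h' = b * w * b := by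
    intro w hw h' hh' hx
    obtain ⟨z, _, huniq⟩ := C2 w
    exact (huniq h' ⟨hh', Or.inr hx⟩).trans
      (huniq _ ⟨(hmemb w).mp hw, Or.inl rfl⟩).symm
  have hbv : h = b * v * b := hveq v hv h hh hhv
  -- x := (b*v*b)*v lies in X ∩ H
  have hbvbH : b * v * b ∈ H := (hmemb v).mp hv
  have hx : (b * v * b) * v ∈ X := hbv ▸ hhv
  have hxH : (b * v * b) * v ∈ H := H.mul_mem hbvbH hv
  -- every h' ∈ H satisfies b*h'*b = h'⁻¹ * x
  have key : ∀ h' : G, h' ∈ H → b * h' * b = h'⁻¹ * ((b * v * b) * v) := by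
    intro h' hh'
    have hk : h'⁻¹ * ((b * v * b) * v) ∈ H := H.mul_mem (H.inv_mem hh') hxH
    have hx' : h' * (h'⁻¹ * ((b * v * b) * v)) ∈ X := by
      rw [mul_inv_cancel_left]; exact hx
    have e := hveq _ hk h' hh' hx'
    -- e : h' = b * (h'⁻¹ * x) * b ; conjugate by b on both sides
    calc b * h' * b
        = b * (b * (h'⁻¹ * ((b * v * b) * v)) * b) * b := by rw [← e]
    _ = (b * b) * (h'⁻¹ * ((b * v * b) * v)) * (b * b) := by group
    _ = h'⁻¹ * ((b * v * b) * v) := by rw [hb2]; group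
  -- with h' = 1 : x = 1
  have hx1 : (b * v * b) * v = 1 := by
    have e := key 1 H.one_mem
    rw [mul_one, hb2, inv_one, one_mul] at e
    exact e.symm
  -- hence b*h'*b = h'⁻¹ for all h' ∈ H
  have hinv : ∀ h' : G, h' ∈ H → b * h' * b = h'⁻¹ := by
    intro h' hh'
    rw [key h' hh', hx1, mul_one]
  -- H is abelian
  have hcomm : ∀ g k : G, g ∈ H → k ∈ H → g * k = k * g := by
    intro g k hg hk
    have h1 := hinv (g * k) (H.mul_mem hg hk)
    have h2 : b * (g * k) * b = g⁻¹ * k⁻¹ := by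
      rw [show b * (g * k) * b = (b * g * b) * (b * k * b) by
        rw [show (b * g * b) * (b * k * b) = b * g * (b * b) * k * b by group, hb2]
        group, hinv g hg, hinv k hk]
    have e : (g * k)⁻¹ = g⁻¹ * k⁻¹ := by rw [← h1, h2]
    calc g * k = ((g * k)⁻¹)⁻¹ := (inv_inv _).symm
    _ = (g⁻¹ * k⁻¹)⁻¹ := by rw [e]
    _ = k * g := by group
  -- unique H-neighbour of b
  obtain ⟨u₀, ⟨hu₀, hp⟩, huniq⟩ := C2 b
  have hu₀b : u₀ * b ∈ X := by
    refine hp.resolve_left ?_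
    intro e
    apply hbH
    rwa [e, show b * b * b = b by rw [hb2, one_mul]] at hu₀
  have hu' : v⁻¹ * u₀ * (b * v * b) ∈ H := H.mul_mem (H.mul_mem (H.inv_mem hv) hu₀) hbvbH
  have hu'b : (v⁻¹ * u₀ * (b * v * b)) * b ∈ X := by
    have h0 := hX v (u₀ * b) hu₀b
    have : v⁻¹ * (u₀ * b) * v = v⁻¹ * u₀ * (b * v * b) * b := by
      rw [show v⁻¹ * u₀ * (b * v * b) * b = v⁻¹ * u₀ * (b * v * (b * b)) by group, hb2]
      group
    rwa [this] at h0
  have e3 : v⁻¹ * u₀ * (b * v * b) = u₀ :=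
    (huniq _ ⟨hu', Or.inr hu'b⟩).trans (huniq u₀ ⟨hu₀, Or.inr hu₀b⟩).symm
  -- conclude : b*v*b = u₀⁻¹ * v * u₀ = v (abelian), so h = v
  have e4 : b * v * b = (v⁻¹ * u₀)⁻¹ * u₀ := eq_inv_mul_iff_mul_eq.mpr e3
  have e5 : b * v * b = v := by
    rw [e4, mul_inv_rev, inv_inv, mul_assoc, hcomm v u₀ hv hu₀, inv_mul_cancel_left]
  rw [hbv, e5]

end Main

theorem perfectCode_iff_coset_involution {G : Type*} [Group G] [Finite G]
    (H : Subgroup G) (X : Set G) (hX : IsNormalSet X) (b : G)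
    (hb2 : b * b = 1) (hb1 : b ≠ 1) (hHb : ∀ h : G, h ∈ H ↔ b⁻¹ * h * b ∈ H) :
    IsPerfectCode (caySum G X) (H : Set G) ↔
      IsPerfectCode (caySum G X) ((fun h => h * b) '' (H : Set G)) := by
  have hbinv : b⁻¹ = b := by rw [inv_eq_iff_mul_eq_one]; exact hb2
  by_cases hbH : b ∈ H
  · have himg : ((fun h => h * b) '' (H : Set G)) = (H : Set G) := by
      ext u
      constructor
      · rintro ⟨h, hh, rfl⟩
        exact H.mul_mem hh hbH
      · intro hu
        exact ⟨u * b, H.mul_mem hu hbH, by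
          show u * b * b = u
          rw [mul_assoc, hb2, mul_one]⟩
    rw [himg]
  · -- membership in H is b-conjugation invariant
    have hmemb : ∀ g : G, g ∈ H ↔ b * g * b ∈ H := by
      intro g; rw [hHb g, hbinv]
    -- reformulate both sides via the master lemma
    rw [master hX, master hX]
    -- reindex the right-hand side
    have himg_mem : ∀ u : G, (u ∈ (fun h => h * b) '' (H : Set G)) ↔ u * b ∈ H := by
      intro u
      constructor
      · rintro ⟨h, hh, rfl⟩
        show h * b * b ∈ H
        rwa [mul_assoc, hb2, mul_one]
      · intro hu
        exact ⟨u * b, hu, by show u * b * b = u; rw [mul_assoc, hb2, mul_one]⟩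
    have hRHS : (∀ v, ∃! u, u ∈ (fun h => h * b) '' (H : Set G) ∧ (u = v ∨ u * v ∈ X)) ↔
        (∀ v, ∃! h, h ∈ H ∧ (h = b * v * b ∨ h * v ∈ X)) := by
      constructor
      · intro R v
        obtain ⟨u, ⟨hu, hp⟩, huniq⟩ := R (b * v)
        refine ⟨u * b, ⟨(himg_mem u).mp hu, ?_⟩, ?_⟩
        · rcases hp with h | h
          · left; rw [h]
          · right
            rwa [show u * b * v = u * (b * v) by rw [mul_assoc]]
        · rintro y ⟨hy, hp'⟩
          have hy' : y * b ∈ (fun h => h * b) '' (H : Set G) := ⟨y, hy, rfl⟩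
          have : y * b = u := by
            refine huniq (y * b) ⟨hy', ?_⟩
            rcases hp' with h | h
            · left
              rw [h]
              rw [show b * v * b * b = b * v * (b * b) by group, hb2, mul_one]
            · right
              rwa [show y * b * (b * v) = y * (b * b) * v by group, hb2, mul_one]
          rw [← this, mul_assoc, hb2, mul_one]
      · intro R v
        obtain ⟨h, ⟨hh, hp⟩, huniq⟩ := R (b * v)
        refine ⟨h * b, ⟨⟨h, hh, rfl⟩, ?_⟩, ?_⟩
        · rcases hp with e | e
          · left
            rw [e, show b * (b * v) * b * b = (b * b) * v * (b * b) by group, hb2]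
            group
          · right
            rwa [mul_assoc]

        · rintro y ⟨hy, hp'⟩
          obtain ⟨z, hz, rfl⟩ := hy
          have : z = h := by
            refine huniq z ⟨hz, ?_⟩
            rcases hp' with e | e
            · left
              rw [show b * (b * v) * b = (b * b) * v * b by group, hb2, one_mul, ← e]
              show z = z * b * b
              rw [mul_assoc, hb2, mul_one]
            · right
              rwa [← mul_assoc]
          rw [this]
    rw [hRHS]
    -- now prove C1 ↔ C2
    constructor
    · intro C1 v
      by_cases hv : v ∈ H
      · have hbvb : b * v * b ∈ H := (hmemb v).mp hv
        refine ⟨b * v * b, ⟨hbvb, Or.inl rfl⟩, ?_⟩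
        rintro y ⟨hy, e | e⟩
        · exact e
        · -- y * v ∈ X with y, v ∈ H : uniqueness in C1 at v gives y = v
          obtain ⟨w, _, huniq⟩ := C1 v
          have e1 : y = v := (huniq y ⟨hy, Or.inr e⟩).trans (huniq v ⟨hv, Or.inl rfl⟩).symm
          have hvv : v * v ∈ X := e1 ▸ e
          rw [e1, (crux1 hX hb2 hHb hbH C1 hv hvv)]
      · have hv' : b * v * b ∉ H := fun hmem => hv ((hmemb v).mpr hmem)
        have := C1 v
        refine existsUnique_congr ?_ |>.mp this
        intro h
        constructor
        · rintro ⟨hh, e | e⟩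
          · exact absurd (e ▸ hh) hv
          · exact ⟨hh, Or.inr e⟩
        · rintro ⟨hh, e | e⟩
          · exact absurd (e ▸ hh) hv'
          · exact ⟨hh, Or.inr e⟩
    · intro C2 v
      by_cases hv : v ∈ H
      · refine ⟨v, ⟨hv, Or.inl rfl⟩, ?_⟩
        rintro y ⟨hy, e | e⟩
        · exact e
        · exact crux2 hX hb2 hHb hbH C2 hv hy e
      · have hv' : b * v * b ∉ H := fun hmem => hv ((hmemb v).mpr hmem)
        have := C2 v
        refine existsUnique_congr ?_ |>.mp this
        intro h
        constructor
        · rintro ⟨hh, e | e⟩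
          · exact absurd (e ▸ hh) hv'
          · exact ⟨hh, Or.inr e⟩
        · rintro ⟨hh, e | e⟩
          · exact absurd (e ▸ hh) hv
          · exact ⟨hh, Or.inr e⟩
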